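/- arXiv:2105.08883 — 3 statements merged into one kernel-verified Lean document; each statement's English description precedes it below -/
import Mathlib

section
/- Let f = f_s + φ with f_s differentiable with L-Lipschitz gradient. Suppose (x_k) and positive reals (h_k) are sequences such that h_k → 0, for each k stencil failure occurs at x_k with size h_k on the coordinate stencil (f(x_k ± h_k e_i) ≥ f(x_k) for all i), and the scaled noise terms satisfy M_k / h_k → 0, where M_k = max of |φ| over {x_k} ∪ {x_k ± h_k e_i}. Then ‖∇f_s(x_k)‖ → 0. -/
open Filter InnerProductSpace

variable {n : ℕ}

local notation "E" => EuclideanSpace ℝ (Fin n)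

lemma descent (fs : E → ℝ) (g : E → E) (hg : ∀ x, HasGradientAt fs (g x) x)
    (L : ℝ) (hL0 : 0 ≤ L) (hL : ∀ y z, ‖g y - g z‖ ≤ L * ‖y - z‖) (x y : E) :
    |fs y - fs x - ⟪g x, y - x⟫_ℝ| ≤ L * ‖y - x‖ ^ 2 := by
  set F : E → ℝ := fun z => fs z - ⟪g x, z⟫_ℝ with hF
  have hderiv : ∀ z, HasFDerivAt F (toDual ℝ E (g z) - toDual ℝ E (g x)) z := by
    intro z
    exact (hg z).hasFDerivAt.sub (toDual ℝ E (g x)).hasFDerivAt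
  have key : ‖F y - F x‖ ≤ (L * ‖y - x‖) * ‖y - x‖ := by
    apply Convex.norm_image_sub_le_of_norm_hasFDerivWithin_le
      (f' := fun z => toDual ℝ E (g z) - toDual ℝ E (g x))
      (fun z _ => (hderiv z).hasFDerivWithinAt) ?_ (convex_closedBall x ‖y - x‖) ?_ ?_
    · intro z hz
      have : ‖toDual ℝ E (g z) - toDual ℝ E (g x)‖ = ‖g z - g x‖ := by
        rw [← map_sub]; exact (toDual ℝ E).norm_map _
      rw [this]
      calc ‖g z - g x‖ ≤ L * ‖z - x‖ := hL z x
        _ ≤ L * ‖y - x‖ := by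
          have hz' : ‖z - x‖ ≤ ‖y - x‖ := by
            simpa [Metric.mem_closedBall, dist_eq_norm] using hz
          exact mul_le_mul_of_nonneg_left hz' hL0
    · exact Metric.mem_closedBall_self (by positivity)
    · simp [Metric.mem_closedBall, dist_eq_norm]
  have : F y - F x = fs y - fs x - ⟪g x, y - x⟫_ℝ := by
    simp [hF, inner_sub_right]; ring
  calc |fs y - fs x - ⟪g x, y - x⟫_ℝ| = ‖F y - F x‖ := by rw [this]; rfl
    _ ≤ (L * ‖y - x‖) * ‖y - x‖ := key
    _ = L * ‖y - x‖ ^ 2 := by ring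

/-- If stencil failure occurs at `x k` with size `h k` on the coordinate stencil for each
`k`, `h k → 0`, and the scaled noise `M k / h k → 0` (where `M k` bounds `|φ|` on the
stencil points), then `‖∇fs (x k)‖ → 0`. -/
theorem stencil_failure_grad_tendsto_zero {n : ℕ}
    (fs φ : EuclideanSpace ℝ (Fin n) → ℝ)
    (g : EuclideanSpace ℝ (Fin n) → EuclideanSpace ℝ (Fin n))
    (hg : ∀ x, HasGradientAt fs (g x) x)
    (L : ℝ) (hL : ∀ y z, ‖g y - g z‖ ≤ L * ‖y - z‖)
    (x : ℕ → EuclideanSpace ℝ (Fin n)) (h M : ℕ → ℝ)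
    (hh : ∀ k, 0 < h k) (hh0 : Tendsto h atTop (nhds 0))
    (hfail : ∀ k, ∀ i : Fin n,
      fs (x k + h k • EuclideanSpace.single i (1 : ℝ)) +
          φ (x k + h k • EuclideanSpace.single i (1 : ℝ)) ≥ fs (x k) + φ (x k) ∧
      fs (x k - h k • EuclideanSpace.single i (1 : ℝ)) +
          φ (x k - h k • EuclideanSpace.single i (1 : ℝ)) ≥ fs (x k) + φ (x k))
    (hMx : ∀ k, |φ (x k)| ≤ M k)
    (hM : ∀ k, ∀ i : Fin n, |φ (x k + h k • EuclideanSpace.single i (1 : ℝ))| ≤ M k ∧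
      |φ (x k - h k • EuclideanSpace.single i (1 : ℝ))| ≤ M k)
    (hMh : Tendsto (fun k => M k / h k) atTop (nhds 0)) :
    Tendsto (fun k => ‖g (x k)‖) atTop (nhds 0) := by
  have hL' : ∀ y z, ‖g y - g z‖ ≤ |L| * ‖y - z‖ := fun y z =>
    (hL y z).trans (mul_le_mul_of_nonneg_right (le_abs_self L) (norm_nonneg _))
  have hM0 : ∀ k, 0 ≤ M k := fun k => (abs_nonneg _).trans (hMx k)
  set B : ℕ → ℝ := fun k => |L| * h k + 2 * (M k / h k) with hB
  have hB0 : ∀ k, 0 ≤ B k := fun k => by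
    have := hh k; have := hM0 k; positivity
  -- coordinate bound
  have coord : ∀ k, ∀ i : Fin n, |g (x k) i| ≤ B k := by
    intro k i
    set e := EuclideanSpace.single i (1 : ℝ)
    have hne : ‖(h k • e : EuclideanSpace ℝ (Fin n))‖ = h k := by
      rw [norm_smul, EuclideanSpace.norm_single]
      simp [abs_of_pos (hh k)]
    have hinner : ⟪g (x k), (h k • e : EuclideanSpace ℝ (Fin n))⟫_ℝ = h k * g (x k) i := by
      rw [real_inner_smul_right]
      simp [e, EuclideanSpace.inner_single_right]
    have d1 := descent fs g hg |L| (abs_nonneg L) hL' (x k) (x k + h k • e)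
    have d2 := descent fs g hg |L| (abs_nonneg L) hL' (x k) (x k - h k • e)
    rw [add_sub_cancel_left] at d1
    have hsub : x k - h k • e - x k = -(h k • e) := by abel
    rw [hsub] at d2
    rw [hinner, hne] at d1
    rw [inner_neg_right, hinner, norm_neg, hne] at d2
    have f1 := (hfail k i).1
    have f2 := (hfail k i).2
    have m1 := (hM k i).1
    have m2 := (hM k i).2
    have mx := hMx k
    have habs1 := abs_le.1 d1
    have habs2 := abs_le.1 d2
    have habsm1 := abs_le.1 m1
    have habsm2 := abs_le.1 m2
    have habsmx := abs_le.1 mx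
    have hk := hh k
    have hdiv : M k / h k * h k = M k := div_mul_cancel₀ _ (ne_of_gt hk)
    rw [abs_le, hB]
    constructor
    · nlinarith [habs1.2, habs2.2, habsm1, habsm2, habsmx, mul_pos hk hk]
    · nlinarith [habs1.2, habs2.2, habsm1, habsm2, habsmx, mul_pos hk hk]
  -- squeeze
  have normle : ∀ k, ‖g (x k)‖ ≤ Real.sqrt n * B k := by
    intro k
    rw [EuclideanSpace.norm_eq]
    calc Real.sqrt (∑ i, ‖g (x k) i‖ ^ 2) ≤ Real.sqrt (∑ _i : Fin n, B k ^ 2) := by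
          apply Real.sqrt_le_sqrt
          apply Finset.sum_le_sum
          intro i _
          have := coord k i
          rw [Real.norm_eq_abs]
          nlinarith [abs_nonneg (g (x k) i)]
      _ = Real.sqrt n * B k := by
          rw [Finset.sum_const, Finset.card_univ, Fintype.card_fin, nsmul_eq_mul,
            Real.sqrt_mul (by positivity), Real.sqrt_sq (hB0 k)]
  have hBto : Tendsto B atTop (nhds 0) := by
    have : Tendsto (fun k => |L| * h k + 2 * (M k / h k)) atTop (nhds (|L| * 0 + 2 * 0)) :=
      ((hh0.const_mul |L|).add (hMh.const_mul 2))
    simpa using this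
  have : Tendsto (fun k => Real.sqrt n * B k) atTop (nhds 0) := by
    simpa using hBto.const_mul (Real.sqrt n)
  exact squeeze_zero (fun k => norm_nonneg _) normle this
end

section
/- Let f = f_s + φ where f_s is differentiable with L-Lipschitz gradient and φ is bounded: |φ(z)| ≤ ε for all z. If x is a point where stencil failure occurs on the coordinate stencil with size h > 0, then ‖∇f_s(x)‖_2 ≤ √n (L h/2 + 2ε/h). In particular, choosing h = 2√(ε/L) yields ‖∇f_s(x)‖_2 ≤ 2√n √(L ε). -/
/-!
Along the segment `t ↦ x + t • d`, an `L`-Lipschitz gradient gives the descent lemma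
`fs (x + d) ≤ fs x + ⟪∇fs x, d⟫ + L/2 ‖d‖²`. At a stencil failure the noisy values at `x ± h eᵢ`
are not below the one at `x`, so `fs (x ± h eᵢ) ≥ fs x - 2ε`; combining both signs with the
descent lemma gives `h |∂ᵢ fs x| ≤ L h²/2 + 2ε` for every coordinate, and summing the squares of
these `n` bounds gives the `√n` factor. The choice `h = 2 √(ε/L)` balances the two terms
`L h/2` and `2ε/h`, both then being `√(L ε)`.
-/

open InnerProductSpace RealInnerProductSpace

theorem OrthonormalBasis.norm_le_sqrt_card_mul {ι F : Type*} [Fintype ι]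
    [NormedAddCommGroup F] [InnerProductSpace ℝ F]
    (b : OrthonormalBasis ι ℝ F) {v : F} {M : ℝ} (hv : ∀ i, |⟪b i, v⟫| ≤ M) :
    ‖v‖ ≤ √(Fintype.card ι) * M := by
  rcases isEmpty_or_nonempty ι with hι | ⟨⟨i₀⟩⟩
  · simpa using b.norm_le_card_mul_iSup_norm_inner v
  · refine (b.norm_le_card_mul_iSup_norm_inner v).trans ?_
    gcongr
    exact Real.iSup_le hv ((abs_nonneg _).trans (hv i₀))

section

variable {F : Type*} [NormedAddCommGroup F] [InnerProductSpace ℝ F] [CompleteSpace F]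
  {f : F → ℝ} {g : F → F} {L : ℝ}

theorem hasDerivAt_apply_add_smul_of_hasGradientAt (hg : ∀ x, HasGradientAt f (g x) x)
    (x d : F) (t : ℝ) :
    HasDerivAt (fun t : ℝ => f (x + t • d)) ⟪g (x + t • d), d⟫ t := by
  have hline : HasDerivAt (fun t : ℝ => x + t • d) d t := by
    simpa using ((hasDerivAt_id t).smul_const d).const_add x
  simpa [toDual_apply_apply, Function.comp_def] using
    (hg (x + t • d)).hasFDerivAt.comp_hasDerivAt t hline

theorem apply_add_le_of_lipschitz_gradient (hg : ∀ x, HasGradientAt f (g x) x)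
    (hL : ∀ y z, ‖g y - g z‖ ≤ L * ‖y - z‖) (x d : F) :
    f (x + d) ≤ f x + ⟪g x, d⟫ + L / 2 * ‖d‖ ^ 2 := by
  set ψ : ℝ → ℝ := fun t => f (x + t • d) - t * ⟪g x, d⟫ - L / 2 * ‖d‖ ^ 2 * t ^ 2 with hψ_def
  have hψ : ∀ t, HasDerivAt ψ (⟪g (x + t • d) - g x, d⟫ - L * t * ‖d‖ ^ 2) t := fun t => by
    refine ((hasDerivAt_apply_add_smul_of_hasGradientAt hg x d t).sub
      ((hasDerivAt_id t).mul_const _) |>.sub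
      ((hasDerivAt_pow 2 t).const_mul (L / 2 * ‖d‖ ^ 2))).congr_deriv ?_
    rw [inner_sub_left]
    ring
  have hψ_nonpos : ∀ t ∈ interior (Set.Ici (0 : ℝ)),
      ⟪g (x + t • d) - g x, d⟫ - L * t * ‖d‖ ^ 2 ≤ 0 := by
    intro t ht
    rw [interior_Ici, Set.mem_Ioi] at ht
    have : ⟪g (x + t • d) - g x, d⟫ ≤ L * t * ‖d‖ ^ 2 :=
      calc ⟪g (x + t • d) - g x, d⟫ ≤ ‖g (x + t • d) - g x‖ * ‖d‖ := real_inner_le_norm _ _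
        _ ≤ L * ‖(x + t • d) - x‖ * ‖d‖ := by gcongr; exact hL _ _
        _ = L * t * ‖d‖ ^ 2 := by
          rw [add_sub_cancel_left, norm_smul, Real.norm_of_nonneg ht.le]
          ring
    linarith
  have hanti : AntitoneOn ψ (Set.Ici 0) :=
    antitoneOn_of_hasDerivWithinAt_nonpos (convex_Ici 0)
      (fun t _ => (hψ t).continuousAt.continuousWithinAt)
      (fun t _ => (hψ t).hasDerivWithinAt) hψ_nonpos
  have h01 := hanti Set.self_mem_Ici (Set.mem_Ici.2 zero_le_one) zero_le_one
  simp only [hψ_def, zero_smul, add_zero, one_smul, zero_mul, sub_zero, one_mul, one_pow,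
    mul_one, zero_pow two_ne_zero, mul_zero] at h01
  linarith

theorem abs_inner_le_of_sub_le_apply_add_of_sub_le_apply_sub
    (hg : ∀ x, HasGradientAt f (g x) x) (hL : ∀ y z, ‖g y - g z‖ ≤ L * ‖y - z‖)
    {x d : F} {δ : ℝ} (hadd : f x - δ ≤ f (x + d)) (hsub : f x - δ ≤ f (x - d)) :
    |⟪g x, d⟫| ≤ L / 2 * ‖d‖ ^ 2 + δ := by
  have hd := apply_add_le_of_lipschitz_gradient hg hL x d
  have hnd := apply_add_le_of_lipschitz_gradient hg hL x (-d)
  rw [inner_neg_right, norm_neg, ← sub_eq_add_neg] at hnd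
  exact abs_le.2 ⟨by linarith, by linarith⟩

def StencilFailure {ι : Type*} [Fintype ι] (f : F → ℝ) (x : F) (h : ℝ)
    (b : OrthonormalBasis ι ℝ F) : Prop :=
  ∀ i, f x ≤ f (x + h • b i) ∧ f x ≤ f (x - h • b i)

theorem StencilFailure.norm_le {ι : Type*} [Fintype ι] {φ : F → ℝ} {ε h : ℝ} {x : F}
    {b : OrthonormalBasis ι ℝ F} (hg : ∀ x, HasGradientAt f (g x) x)
    (hL : ∀ y z, ‖g y - g z‖ ≤ L * ‖y - z‖) (hφ : ∀ z, |φ z| ≤ ε) (hh : 0 < h)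
    (hfail : StencilFailure (f + φ) x h b) :
    ‖g x‖ ≤ √(Fintype.card ι) * (L * h / 2 + 2 * ε / h) := by
  have denoise : ∀ y, (f + φ) x ≤ (f + φ) y → f x - 2 * ε ≤ f y := fun y hy => by
    have hx := abs_le.1 (hφ x)
    have hy' := abs_le.1 (hφ y)
    simp only [Pi.add_apply] at hy
    linarith
  refine b.norm_le_sqrt_card_mul fun i => ?_
  have hi := abs_inner_le_of_sub_le_apply_add_of_sub_le_apply_sub hg hL
    (denoise _ (hfail i).1) (denoise _ (hfail i).2)
  rw [real_inner_smul_right, abs_mul, abs_of_pos hh, real_inner_comm, norm_smul, b.norm_eq_one,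
    Real.norm_of_nonneg hh.le, mul_one] at hi
  rw [show L * h / 2 + 2 * ε / h = (L / 2 * h ^ 2 + 2 * ε) / h by field_simp,
    le_div_iff₀ hh]
  linarith

end

theorem mul_div_two_add_two_mul_div_eq_two_sqrt_mul {L ε h : ℝ} (hL : 0 < L) (hε : 0 ≤ ε)
    (hh : h = 2 * √(ε / L)) : L * h / 2 + 2 * ε / h = 2 * √(L * ε) := by
  subst hh
  set s := √(ε / L)
  have hs : 0 ≤ s := Real.sqrt_nonneg _
  have hε_eq : ε = L * s ^ 2 := by
    rw [Real.sq_sqrt (div_nonneg hε hL.le)]; field_simp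
  have hLε : √(L * ε) = L * s := by
    rw [hε_eq, ← mul_assoc, ← sq, ← mul_pow, Real.sqrt_sq (by positivity)]
  rw [hLε, hε_eq]
  clear_value s
  rcases hs.eq_or_lt with rfl | hs
  · simp
  · field_simp
    ring

theorem stencil_failure_bounded_noise_general {n : ℕ}
    (fs φ : EuclideanSpace ℝ (Fin n) → ℝ)
    (g : EuclideanSpace ℝ (Fin n) → EuclideanSpace ℝ (Fin n))
    (hg : ∀ x, HasGradientAt fs (g x) x)
    (L : ℝ) (hLpos : 0 < L) (hL : ∀ y z, ‖g y - g z‖ ≤ L * ‖y - z‖)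
    (ε : ℝ) (hφ : ∀ z, |φ z| ≤ ε)
    (x : EuclideanSpace ℝ (Fin n)) (h : ℝ) (hh : 0 < h)
    (hfail : ∀ i : Fin n,
      fs (x + h • EuclideanSpace.single i (1 : ℝ)) + φ (x + h • EuclideanSpace.single i (1 : ℝ))
        ≥ fs x + φ x ∧
      fs (x - h • EuclideanSpace.single i (1 : ℝ)) + φ (x - h • EuclideanSpace.single i (1 : ℝ))
        ≥ fs x + φ x) :
    ‖g x‖ ≤ Real.sqrt n * (L * h / 2 + 2 * ε / h) ∧
    (h = 2 * Real.sqrt (ε / L) → ‖g x‖ ≤ 2 * Real.sqrt n * Real.sqrt (L * ε)) := by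
  have hstencil : StencilFailure (fs + φ) x h (EuclideanSpace.basisFun (Fin n) ℝ) := fun i => by
    simpa only [EuclideanSpace.basisFun_apply, Pi.add_apply, ge_iff_le] using hfail i
  have hbound := hstencil.norm_le hg hL hφ hh
  rw [Fintype.card_fin] at hbound
  refine ⟨hbound, fun hstep => ?_⟩
  have hε : 0 ≤ ε := (abs_nonneg _).trans (hφ x)
  rw [mul_div_two_add_two_mul_div_eq_two_sqrt_mul hLpos hε hstep] at hbound
  linarith

/-- With uniformly `ε`-bounded noise, stencil failure on the coordinate stencil of size
`h` gives `‖g x‖ ≤ √n (L h / 2 + 2 ε / h)`; in particular, if `h = 2 √(ε/L)` then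
`‖g x‖ ≤ 2 √n √(L ε)`. -/
theorem stencil_failure_bounded_noise {n : ℕ}
    (fs φ : EuclideanSpace ℝ (Fin n) → ℝ)
    (g : EuclideanSpace ℝ (Fin n) → EuclideanSpace ℝ (Fin n))
    (hg : ∀ x, HasGradientAt fs (g x) x)
    (L : ℝ) (hLpos : 0 < L) (hL : ∀ y z, ‖g y - g z‖ ≤ L * ‖y - z‖)
    (ε : ℝ) (hε : 0 < ε) (hφ : ∀ z, |φ z| ≤ ε)
    (x : EuclideanSpace ℝ (Fin n)) (h : ℝ) (hh : 0 < h)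
    (hfail : ∀ i : Fin n,
      fs (x + h • EuclideanSpace.single i (1 : ℝ)) + φ (x + h • EuclideanSpace.single i (1 : ℝ))
        ≥ fs x + φ x ∧
      fs (x - h • EuclideanSpace.single i (1 : ℝ)) + φ (x - h • EuclideanSpace.single i (1 : ℝ))
        ≥ fs x + φ x) :
    ‖g x‖ ≤ Real.sqrt n * (L * h / 2 + 2 * ε / h) ∧
    (h = 2 * Real.sqrt (ε / L) → ‖g x‖ ≤ 2 * Real.sqrt n * Real.sqrt (L * ε)) :=
  stencil_failure_bounded_noise_general fs φ g hg L hLpos hL ε hφ x h hh hfail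
end

section
/- Let f_s : R^n → R be differentiable with L-Lipschitz gradient, and suppose for a point x and h > 0 that f_s(x + h w) ≥ f_s(x) for all w in a positive spanning set W with ‖w_j‖ ≤ 1. Then ‖∇f_s(x)‖ ≤ (L h)/(2 c_W), where c_W = min over unit vectors u of max_j ⟨−u, w_j⟩/‖w_j‖ is the cosine measure of W, which is strictly positive. -/
/-!
Along the segment from `x` to `x + h w`, the Lipschitz gradient gives the descent inequality
`f (x + h w) ≤ f x + h ⟪∇f x, w⟫ + L h² ‖w‖² / 2`, so stencil failure forces
`⟪-∇f x, w⟫ / ‖w‖ ≤ L h / 2` for every stencil direction `w`. On the other hand the cosine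
measure says that some direction makes an angle with `-∇f x` whose cosine is at least `c_W`,
i.e. `c_W ‖∇f x‖ ≤ max_j ⟪-∇f x, w_j⟫ / ‖w_j‖`. The cosine measure is positive because the
maximal cosine is positive off the origin for a positive spanning set and, being lower
semicontinuous, attains its minimum on the compact unit sphere.
-/

open scoped RealInnerProductSpace
open Set

section Descent

variable {E : Type*} [NormedAddCommGroup E] [InnerProductSpace ℝ E] [CompleteSpace E]
  {f : E → ℝ} {g : E → E} {L : ℝ}

theorem HasGradientAt.hasDerivAt_add_smul {g' x v : E} {t : ℝ}
    (hf : HasGradientAt f g' (x + t • v)) :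
    HasDerivAt (fun s : ℝ => f (x + s • v)) ⟪g', v⟫ t := by
  have hline : HasDerivAt (fun s : ℝ => x + s • v) v t := by
    simpa using ((hasDerivAt_id t).smul_const v).const_add x
  have hcomp := hf.hasFDerivAt.comp_hasDerivAt t hline
  simp only [InnerProductSpace.toDual_apply_apply] at hcomp
  exact hcomp

theorem le_add_inner_gradient_add_of_lipschitz (hg : ∀ x, HasGradientAt f (g x) x)
    (hL : ∀ y z, ‖g y - g z‖ ≤ L * ‖y - z‖) (x v : E) :
    f (x + v) ≤ f x + ⟪g x, v⟫ + L / 2 * ‖v‖ ^ 2 := by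
  set φ : ℝ → ℝ := fun t => f (x + t • v) - t * ⟪g x, v⟫ - L / 2 * t ^ 2 * ‖v‖ ^ 2
  have hφ' : ∀ t, HasDerivAt φ (⟪g (x + t • v), v⟫ - ⟪g x, v⟫ - L * t * ‖v‖ ^ 2) t := by
    intro t
    refine ((((hg _).hasDerivAt_add_smul).sub ((hasDerivAt_id t).mul_const ⟪g x, v⟫)).sub
      (((hasDerivAt_pow 2 t).const_mul (L / 2)).mul_const (‖v‖ ^ 2))).congr_deriv ?_
    simp only [Nat.cast_ofNat]
    ring
  have hφ'_nonpos : ∀ t ∈ interior (Ici (0 : ℝ)),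
      ⟪g (x + t • v), v⟫ - ⟪g x, v⟫ - L * t * ‖v‖ ^ 2 ≤ 0 := by
    intro t ht
    rw [interior_Ici] at ht
    rw [sub_nonpos]
    calc ⟪g (x + t • v), v⟫ - ⟪g x, v⟫ = ⟪g (x + t • v) - g x, v⟫ := (inner_sub_left ..).symm
      _ ≤ ‖g (x + t • v) - g x‖ * ‖v‖ := real_inner_le_norm _ _
      _ ≤ L * ‖x + t • v - x‖ * ‖v‖ := by gcongr; exact hL _ _
      _ = L * t * ‖v‖ ^ 2 := by
        rw [add_sub_cancel_left, norm_smul, Real.norm_of_nonneg (le_of_lt ht)]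
        ring
  have hφ_anti : AntitoneOn φ (Ici 0) :=
    antitoneOn_of_hasDerivWithinAt_nonpos (convex_Ici 0)
      (fun t _ => (hφ' t).continuousAt.continuousWithinAt)
      (fun t _ => (hφ' t).hasDerivWithinAt) hφ'_nonpos
  have hφ01 : φ 1 ≤ φ 0 := hφ_anti self_mem_Ici (mem_Ici.mpr zero_le_one) zero_le_one
  simp only [φ, zero_smul, add_zero, one_smul, zero_mul, sub_zero, one_mul, one_pow,
    zero_pow two_ne_zero, mul_zero] at hφ01
  linarith

theorem inner_neg_div_norm_le_of_le_add_smul (hg : ∀ x, HasGradientAt f (g x) x)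
    (hL : ∀ y z, ‖g y - g z‖ ≤ L * ‖y - z‖) (hL0 : 0 ≤ L) {x w : E} {h : ℝ} (hh : 0 < h)
    (hw : ‖w‖ ≤ 1) (hfail : f x ≤ f (x + h • w)) :
    ⟪-g x, w⟫ / ‖w‖ ≤ L * h / 2 := by
  have hdescent := le_add_inner_gradient_add_of_lipschitz hg hL x (h • w)
  rw [real_inner_smul_right, norm_smul, Real.norm_of_nonneg hh.le] at hdescent
  have hquad : ⟪-g x, w⟫ ≤ L * h / 2 * ‖w‖ ^ 2 := by
    rw [inner_neg_left]
    refine le_of_mul_le_mul_left ?_ hh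
    linarith
  refine div_le_of_le_mul₀ (norm_nonneg _) (by positivity) (hquad.trans ?_)
  have : ‖w‖ ^ 2 ≤ ‖w‖ := by nlinarith [norm_nonneg w]
  gcongr

end Descent

section CosineMeasure

variable {E ι : Type*} [NormedAddCommGroup E] [InnerProductSpace ℝ E]

def PositivelySpans [Fintype ι] (w : ι → E) : Prop :=
  ∀ x, ∃ a : ι → ℝ, (∀ j, 0 ≤ a j) ∧ x = ∑ j, a j • w j

/-- For `w j = 0` the `j`-th term is `0` by the convention `x / 0 = 0`. -/
noncomputable def maxCosine (w : ι → E) (v : E) : ℝ :=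
  ⨆ j, ⟪v, w j⟫ / ‖w j‖

noncomputable def cosineMeasure (w : ι → E) : ℝ :=
  ⨅ u : {u : E // ‖u‖ = 1}, maxCosine w (-u)

theorem PositivelySpans.exists_inner_pos [Fintype ι] {w : ι → E} (hw : PositivelySpans w)
    {v : E} (hv : v ≠ 0) : ∃ j, 0 < ⟪v, w j⟫ := by
  obtain ⟨a, ha, hva⟩ := hw v
  have hsum : ∑ _j : ι, (0 : ℝ) < ∑ j, a j * ⟪v, w j⟫ := by
    rw [Finset.sum_const_zero]
    calc 0 < ‖v‖ ^ 2 := by positivity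
      _ = ⟪v, ∑ j, a j • w j⟫ := by rw [← hva, real_inner_self_eq_norm_sq]
      _ = ∑ j, a j * ⟪v, w j⟫ := by simp only [inner_sum, real_inner_smul_right]
  obtain ⟨j, -, hj⟩ := Finset.exists_lt_of_sum_lt hsum
  exact ⟨j, pos_of_mul_pos_right hj (ha j)⟩

theorem maxCosine_pos [Fintype ι] {w : ι → E} (hw : PositivelySpans w) {v : E} (hv : v ≠ 0) :
    0 < maxCosine w v := by
  obtain ⟨j, hj⟩ := hw.exists_inner_pos hv
  have hwj : w j ≠ 0 := by
    rintro hwj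
    simp [hwj] at hj
  exact (div_pos hj (norm_pos_iff.mpr hwj)).trans_le
    (le_ciSup (f := fun j => ⟪v, w j⟫ / ‖w j‖) (finite_range _).bddAbove j)

theorem maxCosine_smul (w : ι → E) {c : ℝ} (hc : 0 ≤ c) (v : E) :
    maxCosine w (c • v) = c * maxCosine w v := by
  simp only [maxCosine, Real.mul_iSup_of_nonneg hc, real_inner_smul_left, mul_div_assoc]

theorem lowerSemicontinuous_maxCosine [Finite ι] (w : ι → E) :
    LowerSemicontinuous (maxCosine w) :=
  lowerSemicontinuous_ciSup (fun _ => (finite_range _).bddAbove)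
    (fun _ => ((continuous_id.inner continuous_const).div_const _).lowerSemicontinuous)

theorem isLeast_cosineMeasure [Finite ι] [ProperSpace E] [Nontrivial E] (w : ι → E) :
    IsLeast ((fun u => maxCosine w (-u)) '' {u : E | ‖u‖ = 1}) (cosineMeasure w) := by
  have hsphere : {u : E | ‖u‖ = 1} = Metric.sphere 0 1 := by
    ext
    simp
  obtain ⟨u, hu, hmin⟩ := LowerSemicontinuousOn.exists_isMinOn
    (f := fun u => maxCosine w (-u)) (s := {u : E | ‖u‖ = 1})
    (exists_norm_eq E zero_le_one) (by rw [hsphere]; exact isCompact_sphere 0 1)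
    (((lowerSemicontinuous_maxCosine w).comp continuous_neg).lowerSemicontinuousOn _)
  have heq : cosineMeasure w = maxCosine w (-u) := hmin.iInf_eq hu
  exact ⟨⟨u, hu, heq.symm⟩, by rintro _ ⟨v, hv, rfl⟩; exact heq ▸ hmin hv⟩

theorem cosineMeasure_pos [Fintype ι] [ProperSpace E] [Nontrivial E] {w : ι → E}
    (hw : PositivelySpans w) : 0 < cosineMeasure w := by
  obtain ⟨u, hu, heq⟩ := (isLeast_cosineMeasure w).1
  have hu0 : u ≠ 0 := by
    rintro rfl
    simp at hu
  exact heq ▸ maxCosine_pos hw (neg_ne_zero.mpr hu0)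

theorem cosineMeasure_mul_norm_le [Finite ι] [ProperSpace E] (w : ι → E) (v : E) :
    cosineMeasure w * ‖v‖ ≤ maxCosine w (-v) := by
  rcases eq_or_ne v 0 with rfl | hv
  · simp [maxCosine]
  have : Nontrivial E := ⟨⟨v, 0, hv⟩⟩
  have hunit : ‖‖v‖⁻¹ • v‖ = 1 := norm_smul_inv_norm hv
  calc cosineMeasure w * ‖v‖ ≤ maxCosine w (-(‖v‖⁻¹ • v)) * ‖v‖ := by
        gcongr
        exact (isLeast_cosineMeasure w).2 ⟨_, hunit, rfl⟩
    _ = maxCosine w (-v) := by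
        rw [← smul_neg, maxCosine_smul w (by positivity), mul_comm, ← mul_assoc,
          mul_inv_cancel₀ (norm_ne_zero_iff.mpr hv), one_mul]

end CosineMeasure

theorem stencil_failure_positive_spanning_bound_general {n J : ℕ} (hn : 0 < n)
    (fs : EuclideanSpace ℝ (Fin n) → ℝ)
    (g : EuclideanSpace ℝ (Fin n) → EuclideanSpace ℝ (Fin n))
    (hg : ∀ x, HasGradientAt fs (g x) x)
    (L : ℝ) (hL : ∀ y z, ‖g y - g z‖ ≤ L * ‖y - z‖)
    (w : Fin J → EuclideanSpace ℝ (Fin n))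
    (hw1 : ∀ j, ‖w j‖ ≤ 1)
    (hspan : ∀ x : EuclideanSpace ℝ (Fin n),
      ∃ a : Fin J → ℝ, (∀ j, 0 ≤ a j) ∧ x = ∑ j, a j • w j)
    (x : EuclideanSpace ℝ (Fin n)) (h : ℝ) (hh : 0 < h)
    (hfail : ∀ j, fs (x + h • w j) ≥ fs x)
    (cW : ℝ)
    (hcW : cW = ⨅ u : {u : EuclideanSpace ℝ (Fin n) // ‖u‖ = 1},
      ⨆ j, (inner ℝ (-(u : EuclideanSpace ℝ (Fin n))) (w j) : ℝ) / ‖w j‖) :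
    0 < cW ∧ ‖g x‖ ≤ L * h / (2 * cW) := by
  have : Nonempty (Fin n) := ⟨⟨0, hn⟩⟩
  have hcW_eq : cW = cosineMeasure w := hcW
  have hcW_pos : 0 < cW := hcW_eq ▸ cosineMeasure_pos hspan
  obtain ⟨u, hu⟩ := exists_norm_eq (EuclideanSpace ℝ (Fin n)) zero_le_one
  have hL0 : 0 ≤ L := by simpa [hu] using (norm_nonneg _).trans (hL u 0)
  have hmax : maxCosine w (-g x) ≤ L * h / 2 := Real.iSup_le
    (fun j => inner_neg_div_norm_le_of_le_add_smul hg hL hL0 hh (hw1 j) (hfail j))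
    (by positivity)
  refine ⟨hcW_pos, ?_⟩
  have hbound : cW * ‖g x‖ ≤ L * h / 2 :=
    hcW_eq ▸ (cosineMeasure_mul_norm_le w (g x)).trans hmax
  rw [le_div_iff₀ (by positivity)]
  linarith

/-- Stencil failure over a positive spanning set `W` with `‖w j‖ ≤ 1` bounds the
gradient: `‖∇fs x‖ ≤ L h / (2 c_W)`, where the cosine measure
`c_W = min_{‖u‖ = 1} max_j ⟪-u, w j⟫ / ‖w j‖` is strictly positive. -/
theorem stencil_failure_positive_spanning_bound {n J : ℕ} (hn : 0 < n)
    (fs : EuclideanSpace ℝ (Fin n) → ℝ)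
    (g : EuclideanSpace ℝ (Fin n) → EuclideanSpace ℝ (Fin n))
    (hg : ∀ x, HasGradientAt fs (g x) x)
    (L : ℝ) (hL : ∀ y z, ‖g y - g z‖ ≤ L * ‖y - z‖)
    (w : Fin J → EuclideanSpace ℝ (Fin n))
    (hw0 : ∀ j, w j ≠ 0) (hw1 : ∀ j, ‖w j‖ ≤ 1)
    (hspan : ∀ x : EuclideanSpace ℝ (Fin n),
      ∃ a : Fin J → ℝ, (∀ j, 0 ≤ a j) ∧ x = ∑ j, a j • w j)
    (x : EuclideanSpace ℝ (Fin n)) (h : ℝ) (hh : 0 < h)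
    (hfail : ∀ j, fs (x + h • w j) ≥ fs x)
    (cW : ℝ)
    (hcW : cW = ⨅ u : {u : EuclideanSpace ℝ (Fin n) // ‖u‖ = 1},
      ⨆ j, (inner ℝ (-(u : EuclideanSpace ℝ (Fin n))) (w j) : ℝ) / ‖w j‖) :
    0 < cW ∧ ‖g x‖ ≤ L * h / (2 * cW) :=
  stencil_failure_positive_spanning_bound_general hn fs g hg L hL w hw1 hspan x h hh hfail cW hcW
end
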